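/- arXiv:2206.05213 — 4 statements merged into one kernel-verified Lean document; each statement's English description precedes it below -/
import Mathlib

section
/- If a mapping F on a Hilbert space is a contraction with constant r < 1 (i.e. ‖Fx − Fy‖ ≤ r‖x − y‖ for all x, y), then F is α-firmly nonexpansive with constant α = (1+r)/2 and violation 0; that is, ‖Fx − Fy‖² ≤ ‖x − y‖² − ((1−r)/(1+r))‖(x − Fx) − (y − Fy)‖² for all x, y. -/
/-- A contraction with constant `r < 1` on a Hilbert space is α-firmly nonexpansive
with constant `α = (1+r)/2` and violation `0`. -/
theorem stmt2
    {H : Type*} [NormedAddCommGroup H] [InnerProductSpace ℝ H]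
    (F : H → H) (r : ℝ) (hr0 : 0 ≤ r) (hr1 : r < 1)
    (hF : ∀ x y : H, ‖F x - F y‖ ≤ r * ‖x - y‖) :
    ∀ x y : H,
      ‖F x - F y‖ ^ 2 ≤ ‖x - y‖ ^ 2 -
        ((1 - r) / (1 + r)) * ‖(x - F x) - (y - F y)‖ ^ 2 := by
  intro x y
  set s := ‖x - y‖ with hs
  set t := ‖F x - F y‖ with ht
  have hts : t ≤ r * s := hF x y
  have hd : ‖(x - F x) - (y - F y)‖ ≤ s + t := by
    have : (x - F x) - (y - F y) = (x - y) - (F x - F y) := by abel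
    rw [this]
    exact norm_sub_le _ _
  have hd0 : (0:ℝ) ≤ ‖(x - F x) - (y - F y)‖ := norm_nonneg _
  have hs0 : (0:ℝ) ≤ s := norm_nonneg _
  have ht0 : (0:ℝ) ≤ t := norm_nonneg _
  have h1r : (0:ℝ) < 1 + r := by linarith
  have hc0 : (0:ℝ) ≤ (1 - r) / (1 + r) := div_nonneg (by linarith) (le_of_lt h1r)
  have hd2 : ‖(x - F x) - (y - F y)‖ ^ 2 ≤ (s + t) ^ 2 := by nlinarith
  have hcd : (1 - r) / (1 + r) * ‖(x - F x) - (y - F y)‖ ^ 2 ≤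
      (1 - r) / (1 + r) * (s + t) ^ 2 := mul_le_mul_of_nonneg_left hd2 hc0
  have hmul : (1 - r) / (1 + r) * (1 + r) = 1 - r := div_mul_cancel₀ _ (ne_of_gt h1r)
  nlinarith [mul_nonneg hs0 ht0, sq_nonneg (s - t), sq_nonneg (s + t),
    mul_le_mul_of_nonneg_left hts hs0]
end

section
/- Let f: ℝⁿ → ℝ be differentiable with ∇f Lipschitz with constant L and hypomonotone with violation τ ≥ 0 on ℝⁿ, i.e. ⟨∇f(x) − ∇f(y), x − y⟩ ≥ −τ‖x−y‖² for all x, y. Then for any step t > 0, the forward operator G := Id − t∇f satisfies ‖Gx − Gy‖² ≤ (1 + 2tτ + t²L²)‖x−y‖² for all x, y; in particular G is almost nonexpansive with violation at most 2tτ + t²L². -/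
/-! Writing `u = x - y` and `v = ∇f x - ∇f y`, the difference `Gx - Gy` is `u - t v`, and
`‖u - t v‖² = ‖u‖² - 2t⟪v, u⟫ + t²‖v‖²`: hypomonotonicity bounds the cross term by `2tτ‖u‖²`
and the Lipschitz bound gives `‖v‖² ≤ L²‖u‖²`. -/

section ForwardStep

variable {E : Type*} [NormedAddCommGroup E] [InnerProductSpace ℝ E]

theorem norm_sub_smul_sq_le_of_inner_ge {u v : E} {L τ t : ℝ} (ht : 0 ≤ t)
    (hv : ‖v‖ ≤ L * ‖u‖) (huv : -τ * ‖u‖ ^ 2 ≤ inner ℝ v u) :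
    ‖u - t • v‖ ^ 2 ≤ (1 + 2 * t * τ + t ^ 2 * L ^ 2) * ‖u‖ ^ 2 := by
  have hsq : ‖v‖ ^ 2 ≤ L ^ 2 * ‖u‖ ^ 2 := by
    rw [← mul_pow]
    exact pow_le_pow_left₀ (norm_nonneg v) hv 2
  have hcross : -(t * τ * ‖u‖ ^ 2) ≤ t * inner ℝ v u := by
    nlinarith [mul_le_mul_of_nonneg_left huv ht]
  rw [norm_sub_sq_real, real_inner_smul_right, real_inner_comm, norm_smul, mul_pow,
    Real.norm_eq_abs, sq_abs]
  nlinarith [mul_le_mul_of_nonneg_left hsq (sq_nonneg t)]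

theorem norm_forwardStep_sub_sq_le (F : E → E) {L τ t : ℝ} (ht : 0 ≤ t)
    (hLip : ∀ x y, ‖F x - F y‖ ≤ L * ‖x - y‖)
    (hhypo : ∀ x y, -τ * ‖x - y‖ ^ 2 ≤ inner ℝ (F x - F y) (x - y)) (x y : E) :
    ‖(x - t • F x) - (y - t • F y)‖ ^ 2 ≤ (1 + 2 * t * τ + t ^ 2 * L ^ 2) * ‖x - y‖ ^ 2 := by
  have hdiff : (x - t • F x) - (y - t • F y) = (x - y) - t • (F x - F y) := by
    rw [smul_sub]; abel
  rw [hdiff]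
  exact norm_sub_smul_sq_le_of_inner_ge ht (hLip x y) (hhypo x y)

end ForwardStep

theorem stmt12_general
    (n : ℕ) (f : EuclideanSpace ℝ (Fin n) → ℝ)
    (L τ t : ℝ) (ht : 0 < t)
    (hLip : ∀ x y, ‖gradient f x - gradient f y‖ ≤ L * ‖x - y‖)
    (hhypo : ∀ x y,
      -τ * ‖x - y‖ ^ 2 ≤ inner ℝ (gradient f x - gradient f y) (x - y)) :
    ∀ x y : EuclideanSpace ℝ (Fin n),
      ‖(x - t • gradient f x) - (y - t • gradient f y)‖ ^ 2 ≤
        (1 + 2 * t * τ + t ^ 2 * L ^ 2) * ‖x - y‖ ^ 2 :=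
  norm_forwardStep_sub_sq_le (gradient f) ht.le hLip hhypo

/-- If `∇f` is `L`-Lipschitz and hypomonotone with violation `τ ≥ 0`, then the forward
operator `G = Id − t∇f` satisfies `‖Gx − Gy‖² ≤ (1 + 2tτ + t²L²)‖x−y‖²`. -/
theorem stmt12
    (n : ℕ) (f : EuclideanSpace ℝ (Fin n) → ℝ)
    (hdiff : Differentiable ℝ f)
    (L τ t : ℝ) (hL : 0 ≤ L) (hτ : 0 ≤ τ) (ht : 0 < t)
    (hLip : ∀ x y, ‖gradient f x - gradient f y‖ ≤ L * ‖x - y‖)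
    (hhypo : ∀ x y,
      -τ * ‖x - y‖ ^ 2 ≤ inner ℝ (gradient f x - gradient f y) (x - y)) :
    ∀ x y : EuclideanSpace ℝ (Fin n),
      ‖(x - t • gradient f x) - (y - t • gradient f y)‖ ^ 2 ≤
        (1 + 2 * t * τ + t ^ 2 * L ^ 2) * ‖x - y‖ ^ 2 :=
  stmt12_general n f L τ t ht hLip hhypo
end

section
/- Let T₁, T₂ be self-mappings of a Hilbert space H such that T₁ is almost α-firmly nonexpansive with constant 1/2 and violation ε₁, and T₂ is almost α-firmly nonexpansive with constant 1/2 and violation ε₂. Then the reflectors R₁ = 2T₁ − Id and R₂ = 2T₂ − Id satisfy ‖R_j x − R_j y‖² ≤ (1 + 2ε_j)‖x − y‖², and the Douglas–Rachford-type mapping T = ½(R₁∘R₂ + Id) is almost α-firmly nonexpansive with constant 1/2 and violation at most ½((1+2ε₁)(1+2ε₂) − 1). -/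
private lemma pl {H : Type*} [NormedAddCommGroup H] [InnerProductSpace ℝ H]
    (u d : H) : ‖u - d‖ ^ 2 = 2 * ‖u‖ ^ 2 + 2 * ‖d‖ ^ 2 - ‖u + d‖ ^ 2 := by
  have h := parallelogram_law_with_norm ℝ u d
  nlinarith [h, norm_nonneg (u+d), norm_nonneg (u-d)]

/-- If `T₁, T₂` are almost α-firmly nonexpansive with constant `1/2` and violations
`ε₁, ε₂`, then their reflectors satisfy `‖R_j x − R_j y‖² ≤ (1+2ε_j)‖x−y‖²`, and the
Douglas–Rachford map `T = ½(R₁∘R₂ + Id)` is almost α-firmly nonexpansive with constant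
`1/2` and violation at most `½((1+2ε₁)(1+2ε₂) − 1)`. -/
theorem stmt14
    {H : Type*} [NormedAddCommGroup H] [InnerProductSpace ℝ H]
    (T₁ T₂ : H → H) (ε₁ ε₂ : ℝ) (hε₁ : 0 ≤ ε₁) (hε₂ : 0 ≤ ε₂)
    (h₁ : ∀ x y : H, ‖T₁ x - T₁ y‖ ^ 2 ≤ (1 + ε₁) * ‖x - y‖ ^ 2 -
      ‖(x - T₁ x) - (y - T₁ y)‖ ^ 2)
    (h₂ : ∀ x y : H, ‖T₂ x - T₂ y‖ ^ 2 ≤ (1 + ε₂) * ‖x - y‖ ^ 2 -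
      ‖(x - T₂ x) - (y - T₂ y)‖ ^ 2)
    (R₁ R₂ T : H → H)
    (hR₁ : R₁ = fun x => (2 : ℝ) • T₁ x - x)
    (hR₂ : R₂ = fun x => (2 : ℝ) • T₂ x - x)
    (hT : T = fun x => (2 : ℝ)⁻¹ • (R₁ (R₂ x) + x)) :
    (∀ x y : H, ‖R₁ x - R₁ y‖ ^ 2 ≤ (1 + 2 * ε₁) * ‖x - y‖ ^ 2) ∧
    (∀ x y : H, ‖R₂ x - R₂ y‖ ^ 2 ≤ (1 + 2 * ε₂) * ‖x - y‖ ^ 2) ∧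
    (∀ x y : H, ‖T x - T y‖ ^ 2 ≤
      (1 + ((1 + 2 * ε₁) * (1 + 2 * ε₂) - 1) / 2) * ‖x - y‖ ^ 2 -
        ‖(x - T x) - (y - T y)‖ ^ 2) := by
  -- key identity for any map S
  have key : ∀ (S : H → H) (x y : H),
      ‖(2 : ℝ) • S x - x - ((2 : ℝ) • S y - y)‖ ^ 2 =
        2 * ‖S x - S y‖ ^ 2 + 2 * ‖(x - S x) - (y - S y)‖ ^ 2 - ‖x - y‖ ^ 2 := by
    intro S x y
    have e1 : (2 : ℝ) • S x - x - ((2 : ℝ) • S y - y) =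
        (S x - S y) - ((x - S x) - (y - S y)) := by
      simp only [two_smul]; abel
    have e2 : (S x - S y) + ((x - S x) - (y - S y)) = x - y := by abel
    rw [e1, pl, e2]
  have hRle : ∀ (S : H → H) (ε : ℝ),
      (∀ x y : H, ‖S x - S y‖ ^ 2 ≤ (1 + ε) * ‖x - y‖ ^ 2 -
        ‖(x - S x) - (y - S y)‖ ^ 2) →
      ∀ x y : H, ‖(2 : ℝ) • S x - x - ((2 : ℝ) • S y - y)‖ ^ 2 ≤
        (1 + 2 * ε) * ‖x - y‖ ^ 2 := by
    intro S ε hS x y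
    rw [key]
    nlinarith [hS x y]
  have hRe1 : ∀ x y : H, ‖R₁ x - R₁ y‖ ^ 2 ≤ (1 + 2 * ε₁) * ‖x - y‖ ^ 2 := by
    intro x y; rw [hR₁]; exact hRle T₁ ε₁ h₁ x y
  have hRe2 : ∀ x y : H, ‖R₂ x - R₂ y‖ ^ 2 ≤ (1 + 2 * ε₂) * ‖x - y‖ ^ 2 := by
    intro x y; rw [hR₂]; exact hRle T₂ ε₂ h₂ x y
  refine ⟨hRe1, hRe2, ?_⟩
  intro x y
  -- 2 • T x - x = R₁ (R₂ x)
  have hTR : ∀ z : H, (2 : ℝ) • T z - z = R₁ (R₂ z) := by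
    intro z; rw [hT]; simp [smul_add, smul_smul]
  have hk := key T x y
  rw [hTR, hTR] at hk
  have hc : ‖R₁ (R₂ x) - R₁ (R₂ y)‖ ^ 2 ≤ (1 + 2 * ε₁) * (1 + 2 * ε₂) * ‖x - y‖ ^ 2 := by
    calc ‖R₁ (R₂ x) - R₁ (R₂ y)‖ ^ 2 ≤ (1 + 2 * ε₁) * ‖R₂ x - R₂ y‖ ^ 2 :=
          hRe1 (R₂ x) (R₂ y)
      _ ≤ (1 + 2 * ε₁) * ((1 + 2 * ε₂) * ‖x - y‖ ^ 2) := by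
          have := hRe2 x y; nlinarith
      _ = (1 + 2 * ε₁) * (1 + 2 * ε₂) * ‖x - y‖ ^ 2 := by ring
  nlinarith [hk, hc]
end

section
/- Let (G, d) be a metric space, T: G → G, S = Fix T nonempty, and suppose T satisfies: (i) d²(Tx, s) ≤ (1+ε)d²(x, s) − ((1−α)/α)ψ(x, s) for all x ∈ G, s ∈ S, where ψ(x,s) ≥ 0; and (ii) metric subregularity: d(x, S) ≤ r·√(ψ(x, x_S)) for x_S a nearest point of S to x, with constant r satisfying √((1−α)/(α(1+ε))) ≤ r < √((1−α)/(αε)). Then d(Tx, S) ≤ c·d(x, S) for all x ∈ G, where c = √(1 + ε − (1−α)/(r²α)) < 1; i.e., the distance to the fixed point set contracts Q-linearly under T. -/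
open Metric

/-
Applying the inequality (i) at the nearest point `p` of `S` to `x` bounds
`d(Tx, S)² ≤ d(Tx, p)²` by `(1 + ε) d(x, S)² − ((1 − α)/α) ψ(x, p)`, and subregularity gives
`ψ(x, p) ≥ d(x, S)² / r²`; hence `d(Tx, S)² ≤ c² d(x, S)²`. The upper bound on `r` says exactly
that `ε < (1 − α)/(r²α)`, i.e. `c² < 1`.
-/

lemma Real.le_sqrt_mul_of_sq_le_mul_sq {a b c : ℝ} (hb : 0 ≤ b) (h : a ^ 2 ≤ c * b ^ 2) :
    a ≤ √c * b := by
  calc a ≤ √(c * b ^ 2) := Real.le_sqrt_of_sq_le h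
    _ = √c * b := by rw [Real.sqrt_mul' c (sq_nonneg b), Real.sqrt_sq hb]

lemma sq_div_sq_le_of_le_mul_sqrt {d r ψ : ℝ} (hd : 0 ≤ d) (hψ : 0 ≤ ψ) (h : d ≤ r * √ψ) :
    d ^ 2 / r ^ 2 ≤ ψ := by
  have hsq : d ^ 2 ≤ r ^ 2 * ψ := by
    simpa [mul_pow, Real.sq_sqrt hψ] using pow_le_pow_left₀ hd h 2
  rcases eq_or_ne r 0 with rfl | hr
  · simpa using hψ
  · rwa [div_le_iff₀ (by positivity), mul_comm]

lemma Metric.infDist_sq_le_of_nearest_point {G : Type*} [MetricSpace G] {S : Set G}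
    {x y p : G} {ε κ r ψ : ℝ} (hp : p ∈ S) (hpx : dist x p = infDist x S)
    (hκ : 0 ≤ κ) (hψ : 0 ≤ ψ)
    (hstep : dist y p ^ 2 ≤ (1 + ε) * dist x p ^ 2 - κ * ψ)
    (hsub : infDist x S ≤ r * √ψ) :
    infDist y S ^ 2 ≤ (1 + ε - κ / r ^ 2) * infDist x S ^ 2 := by
  have hψ_lb : infDist x S ^ 2 / r ^ 2 ≤ ψ :=
    sq_div_sq_le_of_le_mul_sqrt infDist_nonneg hψ hsub
  calc infDist y S ^ 2 ≤ dist y p ^ 2 :=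
        pow_le_pow_left₀ infDist_nonneg (infDist_le_dist_of_mem hp) 2
    _ ≤ (1 + ε) * infDist x S ^ 2 - κ * ψ := by rwa [hpx] at hstep
    _ ≤ (1 + ε) * infDist x S ^ 2 - κ * (infDist x S ^ 2 / r ^ 2) := by gcongr
    _ = (1 + ε - κ / r ^ 2) * infDist x S ^ 2 := by ring

lemma one_add_sub_div_lt_one {α ε r : ℝ} (hα : 0 < α ∧ α < 1) (hr : 0 < r)
    (hrhi : 0 < ε → r < √((1 - α) / (α * ε))) :
    1 + ε - (1 - α) / (r ^ 2 * α) < 1 := by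
  obtain ⟨hα0, hα1⟩ := hα
  suffices ε < (1 - α) / (r ^ 2 * α) by linarith
  rcases le_or_gt ε 0 with hε | hε
  · exact hε.trans_lt (div_pos (by linarith) (by positivity))
  · have hr2 : r ^ 2 * (α * ε) < 1 - α :=
      (lt_div_iff₀ (by positivity)).1 ((Real.lt_sqrt hr.le).1 (hrhi hε))
    rw [lt_div_iff₀ (by positivity)]
    linarith

theorem stmt17_general
    {G : Type*} [MetricSpace G]
    (T : G → G) (S : Set G)
    (ψ : G → G → ℝ) (hψ : ∀ x : G, ∀ s ∈ S, 0 ≤ ψ x s)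
    (α ε r : ℝ) (hα : 0 < α ∧ α < 1) (hr : 0 < r)
    (hfne : ∀ x : G, ∀ s ∈ S,
      dist (T x) s ^ 2 ≤ (1 + ε) * dist x s ^ 2 - ((1 - α) / α) * ψ x s)
    (proj : G → G) (hproj : ∀ x : G, proj x ∈ S ∧ dist x (proj x) = infDist x S)
    (hsub : ∀ x : G, infDist x S ≤ r * Real.sqrt (ψ x (proj x)))
    (hrhi : 0 < ε → r < Real.sqrt ((1 - α) / (α * ε))) :
    (∀ x : G,
      infDist (T x) S ≤
        Real.sqrt (1 + ε - (1 - α) / (r ^ 2 * α)) * infDist x S) ∧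
    Real.sqrt (1 + ε - (1 - α) / (r ^ 2 * α)) < 1 := by
  refine ⟨fun x => ?_, ?_⟩
  · obtain ⟨hmem, hdist⟩ := hproj x
    have hκ : 0 ≤ (1 - α) / α := div_nonneg (by linarith [hα.2]) hα.1.le
    have hsq := infDist_sq_le_of_nearest_point hmem hdist hκ (hψ x _ hmem)
      (hfne x _ hmem) (hsub x)
    rw [div_div, mul_comm α] at hsq
    exact Real.le_sqrt_mul_of_sq_le_mul_sq infDist_nonneg hsq
  · exact (Real.sqrt_lt' one_pos).2 (by simpa using one_add_sub_div_lt_one hα hr hrhi)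

/-- If `T` is almost α-firmly nonexpansive toward its fixed point set `S` with
nonnegative transport discrepancy `ψ`, and `ψ` is metrically subregular in the sense
that `d(x, S) ≤ r·√(ψ(x, x_S))` for a nearest point `x_S`, with
`√((1−α)/(α(1+ε))) ≤ r < √((1−α)/(αε))`, then `d(Tx, S) ≤ c·d(x, S)` with
`c = √(1 + ε − (1−α)/(r²α)) < 1`. -/
theorem stmt17
    {G : Type*} [MetricSpace G]
    (T : G → G) (S : Set G) (hS : S.Nonempty)
    (hSfix : S = {x : G | T x = x})
    (ψ : G → G → ℝ) (hψ : ∀ x : G, ∀ s ∈ S, 0 ≤ ψ x s)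
    (α ε r : ℝ) (hα : 0 < α ∧ α < 1) (hε : 0 ≤ ε) (hr : 0 < r)
    (hfne : ∀ x : G, ∀ s ∈ S,
      dist (T x) s ^ 2 ≤ (1 + ε) * dist x s ^ 2 - ((1 - α) / α) * ψ x s)
    (proj : G → G) (hproj : ∀ x : G, proj x ∈ S ∧ dist x (proj x) = infDist x S)
    (hsub : ∀ x : G, infDist x S ≤ r * Real.sqrt (ψ x (proj x)))
    (hrlo : Real.sqrt ((1 - α) / (α * (1 + ε))) ≤ r)
    (hrhi : 0 < ε → r < Real.sqrt ((1 - α) / (α * ε))) :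
    (∀ x : G,
      infDist (T x) S ≤
        Real.sqrt (1 + ε - (1 - α) / (r ^ 2 * α)) * infDist x S) ∧
    Real.sqrt (1 + ε - (1 - α) / (r ^ 2 * α)) < 1 :=
  stmt17_general T S ψ hψ α ε r hα hr hfne proj hproj hsub hrhi
end
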